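/- arXiv:2401.02877 — 3 statements merged into one kernel-verified Lean document; each statement's English description precedes it below -/
import Mathlib

section
/- Let H : [0,∞) → [0,∞) be a C¹ function and D : [0,∞) → [0,∞) be continuous with -H' = D on [0,∞). Suppose there exist real numbers q, c₀ > 0 such that for all t, if D(t) ≤ q then D(t) ≥ c₀·H(t). Then for all t ≥ H(0)/q, one has H(t) ≤ H(0)·exp(c₀·H(0)/q)·exp(-c₀·t). -/
/-!
`H` is nonincreasing. While `H > q / c₀` the dissipation exceeds `q`, so `H` falls at rate at
least `q` and must be below `q / c₀` by the time `H 0 / q`. From then on `H` stays below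
`q / c₀`, hence `D ≥ c₀ H` there, and Grönwall's inequality gives decay at rate `c₀` starting
from `H (H 0 / q) ≤ H 0`.
-/

open Real Set

theorem le_gronwallBound_of_hasDerivAt {f f' : ℝ → ℝ} {δ K ε a b : ℝ}
    (hf : ∀ x ∈ Icc a b, HasDerivAt f (f' x) x) (ha : f a ≤ δ)
    (bound : ∀ x ∈ Ico a b, f' x ≤ K * f x + ε) :
    ∀ x ∈ Icc a b, f x ≤ gronwallBound δ K ε (x - a) :=
  le_gronwallBound_of_liminf_deriv_right_le (fun x hx ↦ (hf x hx).continuousAt.continuousWithinAt)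
    (fun x hx _ hr ↦ (hf x (Ico_subset_Icc_self hx)).hasDerivWithinAt.liminf_right_slope_le hr)
    ha bound

theorem antitoneOn_Ici_of_hasDerivAt_nonpos {f f' : ℝ → ℝ} {a : ℝ}
    (hf : ∀ x ≥ a, HasDerivAt f (f' x) x) (hf' : ∀ x > a, f' x ≤ 0) :
    AntitoneOn f (Ici a) := by
  refine antitoneOn_of_hasDerivWithinAt_nonpos (f' := f') (convex_Ici a)
    (fun x hx ↦ (hf x hx).continuousAt.continuousWithinAt) (fun x hx ↦ ?_) (fun x hx ↦ ?_)
  · rw [interior_Ici] at hx ⊢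
    exact (hf x (le_of_lt hx)).hasDerivWithinAt
  · exact hf' x (interior_Ici.subset hx)

section EntropyDissipation

variable {H D : ℝ → ℝ} {q c₀ : ℝ}

theorem dissipation_gt_of_entropy_gt (hc₀ : 0 < c₀)
    (hkey : ∀ t ≥ 0, D t ≤ q → c₀ * H t ≤ D t) {s : ℝ} (hs : 0 ≤ s) (hHs : q / c₀ < H s) :
    q < D s := by
  by_contra! hDs
  have := hkey s hs hDs
  rw [div_lt_iff₀' hc₀] at hHs
  linarith

theorem entropy_le_at_hitting_time (hH0 : 0 ≤ H 0) (hanti : AntitoneOn H (Ici 0))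
    (hderiv : ∀ t ≥ 0, HasDerivAt H (-(D t)) t) (hq : 0 < q) (hc₀ : 0 < c₀)
    (hkey : ∀ t ≥ 0, D t ≤ q → c₀ * H t ≤ D t) :
    H (H 0 / q) ≤ q / c₀ := by
  set T := H 0 / q
  have hT : 0 ≤ T := div_nonneg hH0 hq.le
  by_contra! hHT
  have hdrop : ∀ s ∈ Ico 0 T, -(D s) ≤ 0 * H s + -q := fun s hs ↦ by
    have := dissipation_gt_of_entropy_gt hc₀ hkey hs.1
      (hHT.trans_le (hanti hs.1 hT hs.2.le))
    linarith
  have hHT_le := le_gronwallBound_of_hasDerivAt (fun x hx ↦ hderiv x hx.1) le_rfl hdrop T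
    (right_mem_Icc.2 hT)
  have hqT : q * T = H 0 := mul_div_cancel₀ _ hq.ne'
  rw [gronwallBound_K0] at hHT_le
  have : 0 < q / c₀ := div_pos hq hc₀
  linarith

theorem entropy_dissipation_of_entropy_le {T : ℝ} (hT : 0 ≤ T) (hanti : AntitoneOn H (Ici 0))
    (hHT : H T ≤ q / c₀) (hc₀ : 0 < c₀) (hkey : ∀ t ≥ 0, D t ≤ q → c₀ * H t ≤ D t) :
    ∀ s ≥ T, c₀ * H s ≤ D s := by
  intro s hs
  rcases le_or_gt (D s) q with hDs | hDs
  · exact hkey s (hT.trans hs) hDs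
  · have hHs : H s ≤ q / c₀ := (hanti hT (hT.trans hs) hs).trans hHT
    rw [le_div_iff₀' hc₀] at hHs
    linarith

end EntropyDissipation

theorem landau_exp_decay_general
    (H D : ℝ → ℝ) (q c₀ : ℝ)
    (hHnn : ∀ t ≥ 0, 0 ≤ H t)
    (hDnn : ∀ t ≥ 0, 0 ≤ D t)
    (hderiv : ∀ t ≥ 0, HasDerivAt H (-(D t)) t)
    (hq : 0 < q) (hc₀ : 0 < c₀)
    (hkey : ∀ t ≥ 0, D t ≤ q → c₀ * H t ≤ D t) :
    ∀ t ≥ H 0 / q, H t ≤ H 0 * Real.exp (c₀ * H 0 / q) * Real.exp (-c₀ * t) := by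
  intro t ht
  have hT : 0 ≤ H 0 / q := div_nonneg (hHnn 0 le_rfl) hq.le
  have hanti : AntitoneOn H (Ici 0) :=
    antitoneOn_Ici_of_hasDerivAt_nonpos hderiv fun x hx ↦ neg_nonpos.2 (hDnn x hx.le)
  have hHT := entropy_le_at_hitting_time (hHnn 0 le_rfl) hanti hderiv hq hc₀ hkey
  have hdiss := entropy_dissipation_of_entropy_le hT hanti hHT hc₀ hkey
  have hdecay := le_gronwallBound_of_hasDerivAt (a := H 0 / q) (K := -c₀) (ε := 0)
    (fun x hx ↦ hderiv x (hT.trans hx.1)) le_rfl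
    (fun x hx ↦ by linarith [hdiss x hx.1]) t (right_mem_Icc.2 ht)
  rw [gronwallBound_ε0] at hdecay
  calc H t ≤ H (H 0 / q) * exp (-c₀ * (t - H 0 / q)) := hdecay
    _ ≤ H 0 * exp (-c₀ * (t - H 0 / q)) := by gcongr; exact hanti self_mem_Ici hT hT
    _ = H 0 * exp (c₀ * H 0 / q) * exp (-c₀ * t) := by
      rw [mul_assoc, ← exp_add]; ring_nf

theorem landau_exp_decay
    (H D : ℝ → ℝ) (q c₀ : ℝ)
    (hHnn : ∀ t ≥ 0, 0 ≤ H t)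
    (hDnn : ∀ t ≥ 0, 0 ≤ D t)
    (hderiv : ∀ t ≥ 0, HasDerivAt H (-(D t)) t)
    (hDcont : ContinuousOn D (Ici 0))
    (hq : 0 < q) (hc₀ : 0 < c₀)
    (hkey : ∀ t ≥ 0, D t ≤ q → c₀ * H t ≤ D t) :
    ∀ t ≥ H 0 / q, H t ≤ H 0 * Real.exp (c₀ * H 0 / q) * Real.exp (-c₀ * t) :=
  landau_exp_decay_general H D q c₀ hHnn hDnn hderiv hq hc₀ hkey
end

section
/- Let f : ℝ³ → [0,∞) be measurable with ∫ f = 1 and ∫ |v|² f(v) dv = 3, and suppose |·|² f ∈ L²(ℝ³). Then for every γ ∈ [0,1], σ_γ(f) := sup_{v ∈ ℝ³} ∫ f(w) |v-w|^{-γ} |w|² dw ≤ 3 + 2√π · ‖ |·|² f ‖_{L²(ℝ³)}. -/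
/-!
Split the integral at `‖v - w‖ = 1`. Off the unit ball around `v` the weight `‖v - w‖ ^ (-γ)` is
at most `1`, so that part is bounded by the second moment `3`. On the ball, Cauchy–Schwarz bounds
it by `‖|·|² f‖_{L²}` times `(∫_{‖x‖ < 1} ‖x‖ ^ (-2γ))^{1/2} = (4π / (3 - 2γ))^{1/2} ≤ 2√π`,
the last integral being computed in polar coordinates.
-/

open MeasureTheory Real Set Metric

theorem preimage_sub_left_ball_zero {E : Type*} [SeminormedAddCommGroup E] (v : E) (r : ℝ) :
    (v - ·) ⁻¹' ball 0 r = ball v r := by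
  ext w
  rw [mem_preimage, mem_ball_zero_iff, mem_ball_iff_norm']

section Translation

variable {E : Type*} [NormedAddCommGroup E] [MeasurableSpace E] [MeasurableAdd E] [MeasurableNeg E]
  (μ : Measure E) [μ.IsAddLeftInvariant] [μ.IsNegInvariant]

theorem setIntegral_ball_comp_sub_left {F : Type*} [NormedAddCommGroup F] [NormedSpace ℝ F]
    (φ : E → F) (v : E) (r : ℝ) :
    ∫ w in ball v r, φ (v - w) ∂μ = ∫ x in ball 0 r, φ x ∂μ := by
  have h := (μ.measurePreserving_sub_left v).setIntegral_preimage_emb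
    (MeasurableEquiv.subLeft v).measurableEmbedding φ (ball 0 r)
  rwa [preimage_sub_left_ball_zero] at h

theorem integrableOn_ball_comp_sub_left_iff {F : Type*} [NormedAddCommGroup F] {φ : E → F} {v : E}
    {r : ℝ} : IntegrableOn (fun w => φ (v - w)) (ball v r) μ ↔ IntegrableOn φ (ball 0 r) μ := by
  have h := (μ.measurePreserving_sub_left v).integrableOn_comp_preimage
    (MeasurableEquiv.subLeft v).measurableEmbedding (f := φ) (s := ball 0 r)
  rwa [preimage_sub_left_ball_zero] at h

end Translation

theorem rpow_neg_sq {x : ℝ} (hx : 0 ≤ x) (s : ℝ) : (x ^ (-s)) ^ 2 = x ^ (-(2 * s)) := by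
  rw [← rpow_mul_natCast hx]
  ring_nf

section HaarBall

variable {E : Type*} [NormedAddCommGroup E] [NormedSpace ℝ E] [FiniteDimensional ℝ E]
  [MeasurableSpace E] [BorelSpace E] [Nontrivial E] (μ : Measure E) [μ.IsAddHaarMeasure]

theorem setIntegral_unitBall_norm_rpow_neg {s : ℝ} (hs : s < Module.finrank ℝ E) :
    ∫ x in ball (0 : E) 1, ‖x‖ ^ (-s) ∂μ =
      Module.finrank ℝ E / (Module.finrank ℝ E - s) * μ.real (ball 0 1) := by
  set d := Module.finrank ℝ E
  have hds : 0 < (d : ℝ) - s := by linarith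
  rw [← integral_indicator measurableSet_ball]
  have hind : (ball (0 : E) 1).indicator (fun x => ‖x‖ ^ (-s)) =
      fun x => (Iio (1 : ℝ)).indicator (fun r => r ^ (-s)) ‖x‖ := by
    ext x
    by_cases hx : ‖x‖ < 1 <;> simp [hx]
  have hradial : ∫ y in Ioi (0 : ℝ), y ^ (d - 1) • (Iio (1 : ℝ)).indicator (fun r => r ^ (-s)) y =
      1 / (d - s) := by
    have hd : ((d - 1 : ℕ) : ℝ) = d - 1 := by
      rw [Nat.cast_sub Module.finrank_pos, Nat.cast_one]
    rw [setIntegral_congr_fun measurableSet_Ioi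
      (g := (Iio (1 : ℝ)).indicator fun y => y ^ (d - 1 - s)) fun y (hy : 0 < y) => by
        by_cases hy1 : y < 1
        · simp [hy1, ← rpow_natCast, hd, ← rpow_add hy, sub_eq_add_neg]
        · simp [hy1],
      setIntegral_indicator measurableSet_Iio, Ioi_inter_Iio, ← integral_Ioc_eq_integral_Ioo,
      ← intervalIntegral.integral_of_le zero_le_one, integral_rpow (Or.inl (by linarith))]
    simp [zero_rpow (by linarith : d - 1 - s + 1 ≠ 0)]
    ring
  rw [hind, integral_fun_norm_addHaar μ, hradial, nsmul_eq_mul, smul_eq_mul]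
  ring

theorem memLp_two_restrict_ball_norm_sub_rpow_neg {s : ℝ} (hs : 2 * s < Module.finrank ℝ E)
    (v : E) (r : ℝ) : MemLp (fun w => ‖v - w‖ ^ (-s)) 2 (μ.restrict (ball v r)) := by
  refine (memLp_two_iff_integrable_sq (Measurable.aestronglyMeasurable (by fun_prop))).2 ?_
  simp_rw [rpow_neg_sq (norm_nonneg _)]
  refine (integrableOn_ball_comp_sub_left_iff μ (φ := fun x : E => ‖x‖ ^ (-(2 * s)))).2 ?_
  exact integrableOn_ball_of_norm_le_rpow Module.finrank_pos (C := 1) hs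
    (ae_of_all _ fun x => by simp [abs_of_nonneg (rpow_nonneg (norm_nonneg x) _)])
    (Measurable.aestronglyMeasurable (by fun_prop))

end HaarBall

section L2

variable {α : Type*} [MeasurableSpace α] {μ : Measure α}

theorem MeasureTheory.MemLp.toReal_eLpNorm_two_eq_sqrt {f : α → ℝ} (hf : MemLp f 2 μ) :
    (eLpNorm f 2 μ).toReal = √(∫ a, f a ^ 2 ∂μ) := by
  rw [hf.eLpNorm_eq_integral_rpow_norm two_ne_zero ENNReal.ofNat_ne_top,
    ENNReal.toReal_ofReal (by positivity), sqrt_eq_rpow]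
  norm_num

theorem integral_mul_le_toReal_eLpNorm_two_mul {f g : α → ℝ} (hf : MemLp f 2 μ)
    (hg : MemLp g 2 μ) :
    ∫ a, f a * g a ∂μ ≤ (eLpNorm f 2 μ).toReal * (eLpNorm g 2 μ).toReal := by
  have h2 : ENNReal.ofReal 2 = 2 := by norm_num
  calc ∫ a, f a * g a ∂μ ≤ ∫ a, ‖f a‖ * ‖g a‖ ∂μ := by
        simp_rw [← norm_mul]
        exact (le_abs_self _).trans (abs_integral_le_integral_abs)
    _ ≤ (∫ a, ‖f a‖ ^ (2 : ℝ) ∂μ) ^ (1 / 2 : ℝ) * (∫ a, ‖g a‖ ^ (2 : ℝ) ∂μ) ^ (1 / 2 : ℝ) :=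
        integral_mul_norm_le_Lp_mul_Lq Real.HolderConjugate.two_two (h2 ▸ hf) (h2 ▸ hg)
    _ = (eLpNorm f 2 μ).toReal * (eLpNorm g 2 μ).toReal := by
        rw [hf.eLpNorm_eq_integral_rpow_norm two_ne_zero ENNReal.ofNat_ne_top,
          hg.eLpNorm_eq_integral_rpow_norm two_ne_zero ENNReal.ofNat_ne_top,
          ENNReal.toReal_ofReal (by positivity), ENNReal.toReal_ofReal (by positivity)]
        norm_num

theorem integral_mul_le_integral_add_of_le_one_off {g k : α → ℝ} {s : Set α}
    (hs : MeasurableSet s) (hg_nn : 0 ≤ g) (hk_nn : 0 ≤ k) (hk_le : ∀ a ∉ s, k a ≤ 1)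
    (hg_int : Integrable g μ) (hg_L2 : MemLp g 2 μ) (hk_L2 : MemLp k 2 (μ.restrict s)) :
    ∫ a, g a * k a ∂μ ≤
      ∫ a, g a ∂μ + (eLpNorm g 2 μ).toReal * (eLpNorm k 2 (μ.restrict s)).toReal := by
  have hgk_int : IntegrableOn (fun a => g a * k a) s μ :=
    (hg_L2.restrict s).integrable_mul hk_L2
  have hpointwise : ∀ a, g a * k a ≤ s.indicator (fun a => g a * k a) a + g a := by
    intro a
    by_cases ha : a ∈ s
    · simpa [ha] using hg_nn a
    · simpa [ha] using mul_le_of_le_one_right (hg_nn a) (hk_le a ha)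
  -- dominating `g * k` by `s.indicator (g * k) + g` spares us the integrability of `g * k`
  calc ∫ a, g a * k a ∂μ ≤ ∫ a, s.indicator (fun a => g a * k a) a + g a ∂μ :=
        integral_mono_of_nonneg (ae_of_all _ fun a => mul_nonneg (hg_nn a) (hk_nn a))
          ((hgk_int.integrable_indicator hs).add hg_int) (ae_of_all _ hpointwise)
    _ = ∫ a in s, g a * k a ∂μ + ∫ a, g a ∂μ := by
        rw [integral_add (hgk_int.integrable_indicator hs) hg_int, integral_indicator hs]
    _ ≤ (eLpNorm g 2 μ).toReal * (eLpNorm k 2 (μ.restrict s)).toReal + ∫ a, g a ∂μ := by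
        gcongr
        refine (integral_mul_le_toReal_eLpNorm_two_mul (hg_L2.restrict s) hk_L2).trans ?_
        gcongr
        · exact hg_L2.eLpNorm_ne_top
        · exact Measure.restrict_le_self
    _ = _ := add_comm _ _

end L2

theorem toReal_eLpNorm_two_restrict_ball_norm_sub_rpow_neg_le (v : EuclideanSpace ℝ (Fin 3))
    {γ : ℝ} (hγ : γ ≤ 1) :
    (eLpNorm (fun w => ‖v - w‖ ^ (-γ)) 2 (volume.restrict (ball v 1))).toReal ≤ 2 * √π := by
  have hL2 := memLp_two_restrict_ball_norm_sub_rpow_neg volume (by simp; linarith) v 1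
  have hball : ∫ x in ball (0 : EuclideanSpace ℝ (Fin 3)) 1, ‖x‖ ^ (-(2 * γ)) ≤ 2 ^ 2 * π := by
    rw [setIntegral_unitBall_norm_rpow_neg volume (by simp; linarith), measureReal_def,
      EuclideanSpace.volume_ball_fin_three]
    simp only [finrank_euclideanSpace, Fintype.card_fin, ENNReal.ofReal_one, one_pow, one_mul]
    rw [ENNReal.toReal_ofReal (by positivity)]
    push_cast
    rw [div_mul_eq_mul_div, div_le_iff₀ (by linarith)]
    nlinarith [pi_pos]
  rw [hL2.toReal_eLpNorm_two_eq_sqrt]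
  simp_rw [rpow_neg_sq (norm_nonneg _)]
  rw [setIntegral_ball_comp_sub_left volume (fun x => ‖x‖ ^ (-(2 * γ)))]
  calc √(∫ x in ball 0 1, ‖x‖ ^ (-(2 * γ))) ≤ √(2 ^ 2 * π) := sqrt_le_sqrt hball
    _ = 2 * √π := by rw [sqrt_mul (by norm_num), sqrt_sq (by norm_num)]

theorem sigma_gamma_bound_general
    (f : EuclideanSpace ℝ (Fin 3) → ℝ)
    (hf_nn : ∀ v, 0 ≤ f v)
    (hf_mom2 : ∫ v, ‖v‖ ^ (2 : ℕ) * f v = 3)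
    (hf_wL2 : MemLp (fun v => ‖v‖ ^ (2 : ℕ) * f v) 2 volume)
    (γ : ℝ) (hγ : γ ∈ Set.Icc (0 : ℝ) 1) :
    ∀ v : EuclideanSpace ℝ (Fin 3),
      ∫ w, f w * ‖v - w‖ ^ (-γ) * ‖w‖ ^ (2 : ℕ) ≤
        3 + 2 * Real.sqrt π * (eLpNorm (fun v => ‖v‖ ^ (2 : ℕ) * f v) 2 volume).toReal := by
  intro v
  set g := fun w : EuclideanSpace ℝ (Fin 3) => ‖w‖ ^ (2 : ℕ) * f w
  set k := fun w : EuclideanSpace ℝ (Fin 3) => ‖v - w‖ ^ (-γ)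
  have hg_int : Integrable g := by
    by_contra h
    simp [g, integral_undef h] at hf_mom2
  have hk_L2 : MemLp k 2 (volume.restrict (ball v 1)) :=
    memLp_two_restrict_ball_norm_sub_rpow_neg volume (by simp; linarith [hγ.2]) v 1
  have hk_le_one : ∀ w ∉ ball v 1, k w ≤ 1 := fun w hw =>
    rpow_le_one_of_one_le_of_nonpos (not_lt.1 (mt mem_ball_iff_norm'.2 hw)) (by linarith [hγ.1])
  calc ∫ w, f w * ‖v - w‖ ^ (-γ) * ‖w‖ ^ (2 : ℕ) = ∫ w, g w * k w := by
        congr 1; ext w; simp only [g, k]; ring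
    _ ≤ (∫ w, g w) +
          (eLpNorm g 2 volume).toReal * (eLpNorm k 2 (volume.restrict (ball v 1))).toReal :=
        integral_mul_le_integral_add_of_le_one_off measurableSet_ball
          (fun w => mul_nonneg (by positivity) (hf_nn w)) (fun w => by positivity) hk_le_one
          hg_int hf_wL2 hk_L2
    _ ≤ 3 + 2 * √π * (eLpNorm g 2 volume).toReal := by
        rw [hf_mom2, mul_comm (2 * √π)]
        gcongr
        exact toReal_eLpNorm_two_restrict_ball_norm_sub_rpow_neg_le v hγ.2

theorem sigma_gamma_bound
    (f : EuclideanSpace ℝ (Fin 3) → ℝ)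
    (hf_nn : ∀ v, 0 ≤ f v)
    (hf_meas : Measurable f)
    (hf_mass : ∫ v, f v = 1)
    (hf_mom2 : ∫ v, ‖v‖ ^ (2 : ℕ) * f v = 3)
    (hf_wL2 : MemLp (fun v => ‖v‖ ^ (2 : ℕ) * f v) 2 volume)
    (γ : ℝ) (hγ : γ ∈ Set.Icc (0 : ℝ) 1) :
    ∀ v : EuclideanSpace ℝ (Fin 3),
      ∫ w, f w * ‖v - w‖ ^ (-γ) * ‖w‖ ^ (2 : ℕ) ≤
        3 + 2 * Real.sqrt π * (eLpNorm (fun v => ‖v‖ ^ (2 : ℕ) * f v) 2 volume).toReal :=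
  sigma_gamma_bound_general f hf_nn hf_mom2 hf_wL2 γ hγ
end

section
/- Let f : ℝ³ → [0,∞) with ∫ f = 1, ∫ |v|² f = 3, and f ∈ L²(ℝ³). Then for every γ ∈ [0,1], Σ_γ(f) := ∬ f(v) f(w) |v-w|^{-γ} |w|² dv dw ≤ 3·(1 + 2√π·‖f‖_{L²(ℝ³)}). -/
/-!
Dominate the kernel pointwise by `|x|^{-γ} ≤ 1 + 1_{|x|<1} |x|⁻¹` for `γ ∈ [0, 1]`. Against `f(v) dv`
the constant part contributes the mass `1`, and by Cauchy–Schwarz and translation invariance the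
singular part contributes at most `‖f‖₂ · ‖1_{|x|<1} |x|⁻¹‖₂ = 2√π ‖f‖₂`, since
`∫_{|x|<1} |x|⁻² dx = 4π` in `ℝ³`. This bound is uniform in `w`; integrating it against
`f(w) |w|² dw`, of total mass `3`, gives the claim. Bounding the Bochner integral by the
`lintegral` of the norm of the integrand makes Tonelli available without integrability side
conditions.
-/

open MeasureTheory Real Set

local notation "ℝ³" => EuclideanSpace ℝ (Fin 3)

lemma sq_mul_indicator_inv_sq_eqOn :
    EqOn (fun y : ℝ => y ^ 2 * (Iio 1).indicator (fun r => r⁻¹ ^ 2) y)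
      ((Iio 1).indicator 1) (Ioi 0) := by
  intro y (hy : 0 < y)
  by_cases hy1 : y < 1
  · simp [indicator_of_mem (show y ∈ Iio 1 from hy1), hy.ne']
  · simp [indicator_of_notMem (show y ∉ Iio 1 from hy1)]

lemma integral_indicator_inv_sq_norm :
    ∫ x : ℝ³, (Iio 1).indicator (fun r => r⁻¹ ^ 2) ‖x‖ = 4 * π := by
  simp only [integral_fun_norm_addHaar, finrank_euclideanSpace_fin, smul_eq_mul]
  rw [setIntegral_congr_fun measurableSet_Ioi sq_mul_indicator_inv_sq_eqOn,
    integral_indicator measurableSet_Iio]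
  simp [measureReal_def, EuclideanSpace.volume_ball_fin_three, Iio_inter_Ioi,
    ENNReal.toReal_ofReal (by positivity : 0 ≤ π * 4 / 3)]
  ring

lemma integrable_indicator_inv_sq_norm :
    Integrable fun x : ℝ³ => (Iio 1).indicator (fun r => r⁻¹ ^ 2) ‖x‖ := by
  rw [integrable_fun_norm_addHaar, finrank_euclideanSpace_fin]
  refine (integrableOn_congr_fun sq_mul_indicator_inv_sq_eqOn measurableSet_Ioi).2 ?_
  exact (integrable_indicator_iff (μ := volume.restrict (Ioi 0)) measurableSet_Iio).2
    (integrableOn_const (by simp [Measure.restrict_apply measurableSet_Iio, Iio_inter_Ioi]))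

lemma enorm_rpow_two_eq_ofReal_sq (r : ℝ) : ‖r‖ₑ ^ (2 : ℝ) = ENNReal.ofReal (r ^ 2) := by
  rw [Real.enorm_eq_ofReal_abs, ENNReal.ofReal_rpow_of_nonneg (abs_nonneg r) zero_le_two,
    Real.rpow_two, sq_abs]

lemma eLpNorm_indicator_inv_norm :
    eLpNorm (fun x : ℝ³ => (Iio 1).indicator (·⁻¹) ‖x‖) 2 volume =
      ENNReal.ofReal (2 * √π) := by
  have hsq (x : ℝ³) : ((Iio 1).indicator (·⁻¹) ‖x‖) ^ 2 =
      (Iio (1 : ℝ)).indicator (fun r => r⁻¹ ^ 2) ‖x‖ := by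
    by_cases hx : ‖x‖ < 1 <;> simp [hx]
  rw [eLpNorm_eq_lintegral_rpow_enorm_toReal two_ne_zero ENNReal.ofNat_ne_top,
    ENNReal.toReal_ofNat]
  simp_rw [enorm_rpow_two_eq_ofReal_sq, hsq]
  rw [← ofReal_integral_eq_lintegral_ofReal integrable_indicator_inv_sq_norm
    (ae_of_all _ fun x => indicator_nonneg (fun r _ => by positivity) _),
    integral_indicator_inv_sq_norm, ENNReal.ofReal_rpow_of_nonneg (by positivity) (by norm_num),
    ← Real.sqrt_eq_rpow, show (4 : ℝ) * π = 2 ^ 2 * π by norm_num,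
    Real.sqrt_mul (by positivity), Real.sqrt_sq zero_le_two]

lemma rpow_neg_le_one_add_indicator_inv {r γ : ℝ} (hr : 0 ≤ r) (hγ : γ ∈ Icc (0 : ℝ) 1) :
    r ^ (-γ) ≤ 1 + (Iio 1).indicator (·⁻¹) r := by
  obtain ⟨hγ0, hγ1⟩ := hγ
  rcases lt_or_ge r 1 with hr1 | hr1
  · rw [indicator_of_mem (mem_Iio.2 hr1)]
    rcases hr.eq_or_lt with rfl | hr0
    · simpa using Real.zero_rpow_le_one (-γ)
    · have : r ^ (-γ) ≤ r ^ (-1 : ℝ) := rpow_le_rpow_of_exponent_ge hr0 hr1.le (by linarith)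
      rw [Real.rpow_neg_one] at this
      linarith
  · rw [indicator_of_notMem (notMem_Iio.2 hr1), add_zero]
    exact rpow_le_one_of_one_le_of_nonpos hr1 (by linarith)

lemma lintegral_enorm_mul_norm_sub_rpow_neg_le {f : ℝ³ → ℝ} (hf : AEStronglyMeasurable f volume)
    {γ : ℝ} (hγ : γ ∈ Icc (0 : ℝ) 1) (w : ℝ³) :
    ∫⁻ v, ‖f v * ‖v - w‖ ^ (-γ)‖ₑ ≤
      eLpNorm f 1 volume + eLpNorm f 2 volume * ENNReal.ofReal (2 * √π) := by
  set k : ℝ³ → ℝ := fun x => (Iio 1).indicator (·⁻¹) ‖x‖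
  have hk : AEStronglyMeasurable k volume :=
    ((measurable_inv.indicator measurableSet_Iio).comp measurable_norm).aestronglyMeasurable
  have hsplit (v : ℝ³) : ‖f v * ‖v - w‖ ^ (-γ)‖ₑ ≤ ‖f v‖ₑ + ‖k (v - w) * f v‖ₑ := by
    have hkv : 0 ≤ k (v - w) := indicator_apply_nonneg fun _ => inv_nonneg.2 (norm_nonneg _)
    have hγv := rpow_neg_le_one_add_indicator_inv (norm_nonneg (v - w)) hγ
    simp only [← ofReal_norm, ← ENNReal.ofReal_add (norm_nonneg _) (norm_nonneg _)]
    refine ENNReal.ofReal_le_ofReal ?_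
    rw [norm_mul, norm_mul, Real.norm_of_nonneg (Real.rpow_nonneg (norm_nonneg _) _),
      Real.norm_of_nonneg hkv]
    nlinarith [mul_le_mul_of_nonneg_left hγv (norm_nonneg (f v))]
  calc ∫⁻ v, ‖f v * ‖v - w‖ ^ (-γ)‖ₑ
      ≤ ∫⁻ v, ‖f v‖ₑ + ‖k (v - w) * f v‖ₑ := lintegral_mono hsplit
    _ = eLpNorm f 1 volume + eLpNorm (fun v => k (v - w) * f v) 1 volume := by
      rw [lintegral_add_left' hf.enorm, eLpNorm_one_eq_lintegral_enorm,
        eLpNorm_one_eq_lintegral_enorm]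
    _ ≤ eLpNorm f 1 volume + eLpNorm (fun v => k (v - w)) 2 volume * eLpNorm f 2 volume := by
      have hkw : AEStronglyMeasurable (fun v => k (v - w)) volume :=
        hk.comp_measurePreserving (measurePreserving_sub_right _ w)
      have := eLpNorm_smul_le_mul_eLpNorm (p := 2) (q := 2) (r := 1) hf hkw
      gcongr
      exact this
    _ = eLpNorm f 1 volume + eLpNorm f 2 volume * ENNReal.ofReal (2 * √π) := by
      have hk_transl :=
        eLpNorm_comp_measurePreserving (p := 2) hk (measurePreserving_sub_right volume w)
      rw [Function.comp_def] at hk_transl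
      rw [hk_transl, eLpNorm_indicator_inv_norm, mul_comm]

lemma integral_integral_le_of_lintegral_lintegral_enorm_le {α β : Type*} [MeasurableSpace α]
    [MeasurableSpace β] {μ : Measure α} {ν : Measure β} {H : α → β → ℝ} {C : ℝ} (hC : 0 ≤ C)
    (h : ∫⁻ a, ∫⁻ b, ‖H a b‖ₑ ∂ν ∂μ ≤ ENNReal.ofReal C) :
    ∫ a, ∫ b, H a b ∂ν ∂μ ≤ C := by
  have : ‖∫ a, ∫ b, H a b ∂ν ∂μ‖ₑ ≤ ENNReal.ofReal C :=
    (enorm_integral_le_lintegral_enorm _).trans <|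
      (lintegral_mono fun a => enorm_integral_le_lintegral_enorm _).trans h
  rw [← ofReal_norm, ENNReal.ofReal_le_ofReal_iff hC] at this
  exact (Real.le_norm_self _).trans this

lemma lintegral_enorm_eq_ofReal_integral {α : Type*} [MeasurableSpace α] {μ : Measure α}
    {g : α → ℝ} (hg : ∀ a, 0 ≤ g a) (h : ∫ a, g a ∂μ ≠ 0) :
    ∫⁻ a, ‖g a‖ₑ ∂μ = ENNReal.ofReal (∫ a, g a ∂μ) := by
  rw [← ofReal_integral_norm_eq_lintegral_enorm (Integrable.of_integral_ne_zero h)]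
  simp_rw [Real.norm_of_nonneg (hg _)]

lemma lintegral_lintegral_enorm_kernel_le {f : ℝ³ → ℝ} (hf : AEStronglyMeasurable f volume)
    {γ : ℝ} (hγ : γ ∈ Icc (0 : ℝ) 1) :
    ∫⁻ v, ∫⁻ w, ‖f v * f w * ‖v - w‖ ^ (-γ) * ‖w‖ ^ (2 : ℕ)‖ₑ ≤
      (∫⁻ w, ‖f w * ‖w‖ ^ (2 : ℕ)‖ₑ) *
        (eLpNorm f 1 volume + eLpNorm f 2 volume * ENNReal.ofReal (2 * √π)) := by
  have hmeas : AEMeasurable (Function.uncurry fun v w : ℝ³ =>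
      ‖f v * f w * ‖v - w‖ ^ (-γ) * ‖w‖ ^ (2 : ℕ)‖ₑ) (volume.prod volume) := by
    have h1 := hf.comp_fst (ν := (volume : Measure ℝ³))
    have h2 := hf.comp_snd (μ := (volume : Measure ℝ³))
    refine (((h1.mul h2).mul ?_).mul ?_).enorm <;>
      exact Measurable.aestronglyMeasurable (by fun_prop)
  have hweight : AEMeasurable (fun w : ℝ³ => ‖f w * ‖w‖ ^ (2 : ℕ)‖ₑ) volume :=
    (hf.mul (Measurable.aestronglyMeasurable (by fun_prop))).enorm
  rw [lintegral_lintegral_swap hmeas, ← lintegral_mul_const'' _ hweight]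
  calc ∫⁻ w, ∫⁻ v, ‖f v * f w * ‖v - w‖ ^ (-γ) * ‖w‖ ^ (2 : ℕ)‖ₑ
      = ∫⁻ w, ‖f w * ‖w‖ ^ (2 : ℕ)‖ₑ * ∫⁻ v, ‖f v * ‖v - w‖ ^ (-γ)‖ₑ := by
        refine lintegral_congr fun w => ?_
        rw [← lintegral_const_mul' _ _ enorm_ne_top]
        congr 1 with v
        rw [← enorm_mul]
        ring_nf
    _ ≤ _ := by
        gcongr with w
        exact lintegral_enorm_mul_norm_sub_rpow_neg_le hf hγ w

theorem Sigma_gamma_bound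
    (f : EuclideanSpace ℝ (Fin 3) → ℝ)
    (hf_nn : ∀ v, 0 ≤ f v)
    (hf_mass : ∫ v, f v = 1)
    (hf_mom2 : ∫ v, ‖v‖ ^ (2 : ℕ) * f v = 3)
    (hf_L2 : MemLp f 2 volume)
    (γ : ℝ) (hγ : γ ∈ Set.Icc (0 : ℝ) 1) :
    ∫ v, ∫ w, f v * f w * ‖v - w‖ ^ (-γ) * ‖w‖ ^ (2 : ℕ) ≤
      3 * (1 + 2 * Real.sqrt π * (eLpNorm f 2 volume).toReal) := by
  have hmass : eLpNorm f 1 volume = ENNReal.ofReal 1 := by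
    rw [eLpNorm_one_eq_lintegral_enorm,
      lintegral_enorm_eq_ofReal_integral hf_nn (by simp [hf_mass]), hf_mass]
  have hmom : ∫⁻ w, ‖f w * ‖w‖ ^ (2 : ℕ)‖ₑ = ENNReal.ofReal 3 := by
    simp_rw [mul_comm (f _)]
    rw [lintegral_enorm_eq_ofReal_integral (fun w => mul_nonneg (by positivity) (hf_nn w))
      (by simp [hf_mom2]), hf_mom2]
  refine integral_integral_le_of_lintegral_lintegral_enorm_le (by positivity) <|
    (lintegral_lintegral_enorm_kernel_le hf_L2.1 hγ).trans_eq ?_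
  rw [hmom, hmass, ← ENNReal.ofReal_toReal hf_L2.2.ne, ← ENNReal.ofReal_mul ENNReal.toReal_nonneg,
    ← ENNReal.ofReal_add zero_le_one (by positivity), ← ENNReal.ofReal_mul zero_le_three,
    ENNReal.toReal_ofReal ENNReal.toReal_nonneg]
  ring_nf
end
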